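/- arXiv:2301.11175 — 5 statements merged into one kernel-verified Lean document; each statement's English description precedes it below -/
import Mathlib

section
/- The safety closure Φ* of any quantitative property Φ is safe: for every f ∈ Σ^ω and v ∈ D with ¬(Φ*(f) ≥ v), there exists a prefix s of f such that ¬(sup_{g ∈ Σ^ω} Φ*(sg) ≥ v). -/
open Classical

variable {A : Type*}

/-- Concatenation of a finite word with an infinite word. -/
noncomputable def ext (s : List A) (g : ℕ → A) : ℕ → A :=
  fun n => if h : n < s.length then s.get ⟨n, h⟩ else g (n - s.length)

/-- The length-`n` prefix of an infinite word. -/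
noncomputable def pref (f : ℕ → A) (n : ℕ) : List A := List.ofFn (fun i : Fin n => f i)

/-- The safety closure of a property. -/
noncomputable def sclo {D : Type*} [CompleteLattice D] (Φ : (ℕ → A) → D) : (ℕ → A) → D :=
  fun f => ⨅ n : ℕ, ⨆ g : ℕ → A, Φ (ext (pref f n) g)

/-- A quantitative property is safe. -/
def Safe {D : Type*} [CompleteLattice D] (Φ : (ℕ → A) → D) : Prop :=
  ∀ f : ℕ → A, ∀ v : D, ¬ v ≤ Φ f → ∃ n : ℕ, ¬ v ≤ ⨆ g : ℕ → A, Φ (ext (pref f n) g)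

/-- A quantitative property is live. -/
def Live {D : Type*} [CompleteLattice D] (Φ : (ℕ → A) → D) : Prop :=
  ∀ f : ℕ → A, Φ f < ⊤ → ∃ v : D, ¬ v ≤ Φ f ∧ ∀ n : ℕ, v ≤ ⨆ g : ℕ → A, Φ (ext (pref f n) g)

theorem safety_closure_safe {D : Type*} [CompleteLattice D] [Fintype A] [Nonempty A]
    (Φ : (ℕ → A) → D) : Safe (sclo Φ) := by
  intro f v hv
  have : ¬ ∀ n : ℕ, v ≤ ⨆ g : ℕ → A, Φ (ext (pref f n) g) := by
    intro h
    exact hv (le_iInf h)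
  push_neg at this
  obtain ⟨n, hn⟩ := this
  refine ⟨n, fun hle => hn ?_⟩
  refine le_trans hle (iSup_le fun g => ?_)
  have hpref : pref (ext (pref f n) g) (pref f n).length = pref f n := by
    apply List.ext_get
    · simp [pref]
    · intro i h1 h2
      simp only [pref, List.getElem_ofFn] at *
      simp [ext, pref, h2]
  calc sclo Φ (ext (pref f n) g)
      ≤ ⨆ g' : ℕ → A, Φ (ext (pref (ext (pref f n) g) (pref f n).length) g') :=
        iInf_le _ _
    _ = ⨆ g' : ℕ → A, Φ (ext (pref f n) g') := by rw [hpref]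
end

section
/- For every property Φ and every safety property Ψ with Φ(f) ≤ Ψ(f) for all f ∈ Σ^ω, it is never the case that Ψ(g) < Φ*(g) for some g ∈ Σ^ω; i.e., the safety closure is a minimal safe upper bound of Φ. -/
open Classical

variable {A : Type*}

theorem safety_closure_minimal {D : Type*} [CompleteLattice D] [Fintype A] [Nonempty A]
    (Φ Ψ : (ℕ → A) → D) (hΨ : Safe Ψ) (h : ∀ f : ℕ → A, Φ f ≤ Ψ f) :
    ∀ g : ℕ → A, ¬ Ψ g < sclo Φ g := by
  intro g hlt
  obtain ⟨n, hn⟩ := hΨ g (sclo Φ g) (not_le_of_gt hlt)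
  apply hn
  calc sclo Φ g ≤ ⨆ k : ℕ → A, Φ (ext (pref g n) k) := iInf_le _ n
    _ ≤ ⨆ k : ℕ → A, Ψ (ext (pref g n) k) := iSup_mono fun k => h _
end

section
/- A property Φ : Σ^ω → D is safe if and only if Φ(f) = Φ*(f) for all f ∈ Σ^ω, where Φ* is the safety closure. -/
open Classical

variable {A : Type*}

lemma ext_pref_self (f : ℕ → A) (n : ℕ) : ext (pref f n) (fun k => f (k + n)) = f := by
  funext m
  simp only [ext, pref, List.length_ofFn]
  split_ifs with h
  · simp
  · congr 1; omega

theorem safe_iff_eq_closure {D : Type*} [CompleteLattice D] [Fintype A] [Nonempty A]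
    (Φ : (ℕ → A) → D) : Safe Φ ↔ ∀ f : ℕ → A, Φ f = sclo Φ f := by
  constructor
  · intro hS f
    refine le_antisymm (le_iInf fun n => ?_) ?_
    · exact le_iSup_of_le (fun k => f (k + n)) (by rw [ext_pref_self])
    · by_contra h
      obtain ⟨n, hn⟩ := hS f (sclo Φ f) h
      exact hn (iInf_le _ n)
  · intro h f v hv
    rw [h f] at hv
    by_contra hc
    push_neg at hc
    exact hv (le_iInf hc)
end

section
/- A property Φ : Σ^ω → D is live if and only if Φ*(f) > Φ(f) for every f ∈ Σ^ω with Φ(f) < ⊤, where Φ* is the safety closure. -/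
open Classical

variable {A : Type*}

lemma ext_pref_eq (f : ℕ → A) (n : ℕ) : ext (pref f n) (fun k => f (n + k)) = f := by
  funext m
  simp only [ext, pref, List.length_ofFn]
  split_ifs with h
  · simp
  · congr 1; omega

theorem live_iff_closure_gt {D : Type*} [CompleteLattice D] [Fintype A] [Nonempty A]
    (Φ : (ℕ → A) → D) :
    Live Φ ↔ ∀ f : ℕ → A, Φ f < ⊤ → Φ f < sclo Φ f := by
  constructor
  · intro hL f hf
    obtain ⟨v, hv1, hv2⟩ := hL f hf
    have hle : Φ f ≤ sclo Φ f := by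
      refine le_iInf fun n => ?_
      have := le_iSup (fun g => Φ (ext (pref f n) g)) (fun k => f (n + k))
      rwa [ext_pref_eq] at this
    refine lt_of_le_of_ne hle fun h => hv1 ?_
    rw [h]
    exact le_iInf hv2
  · intro h f hf
    exact ⟨sclo Φ f, fun hle => absurd hle (not_le_of_gt (h f hf)),
      fun n => iInf_le _ n⟩
end

section
/- For every α ∈ ℝ≥0, a property Φ : Σ^ω → [-∞,∞] is α-safe (for all f and v ∈ [-∞,∞] with Φ(f) < v there is a prefix s of f with sup_{g} Φ(sg) < v + α) if and only if Φ*(f) - Φ(f) ≤ α for all f ∈ Σ^ω, i.e., Φ*(f) ≤ Φ(f) + α. -/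
open Classical

variable {A : Type*}

theorem approx_safe_iff_closure_le {D : Type*} [Fintype A] [Nonempty A]
    (α : ℝ) (hα : 0 ≤ α) (Φ : (ℕ → A) → EReal) :
    (∀ f : ℕ → A, ∀ v : EReal, Φ f < v →
        ∃ n : ℕ, (⨆ g : ℕ → A, Φ (ext (pref f n) g)) < v + (α : EReal)) ↔
      ∀ f : ℕ → A, sclo Φ f ≤ Φ f + (α : EReal) := by
  constructor
  · intro h f
    by_contra hc
    push_neg at hc
    rcases exists_between hc with ⟨w, hw1, hw2⟩
    have hwtop : w ≠ ⊤ := (hw2.trans_le le_top).ne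
    have hwbot : w ≠ ⊥ := by
      intro hb; rw [hb] at hw1
      exact (not_lt_bot hw1)
    have hv : Φ f < w - (α : EReal) := by
      exact (EReal.lt_sub_iff_add_lt (.inl (EReal.coe_ne_bot α))
        (.inl (EReal.coe_ne_top α))).2 hw1
    rcases h f _ hv with ⟨n, hn⟩
    have : w - (α : EReal) + (α : EReal) = w := by
      lift w to ℝ using ⟨hwtop, hwbot⟩
      rw [← EReal.coe_sub, ← EReal.coe_add]
      norm_num
    rw [this] at hn
    have : sclo Φ f < w := lt_of_le_of_lt (iInf_le _ n) hn
    exact absurd hw2 (not_lt.2 this.le)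
  · intro h f v hv
    have h1 : Φ f + (α : EReal) < v + (α : EReal) := by
      cases eq_or_ne v ⊤ with
      | inl hvt =>
        subst hvt
        rw [EReal.top_add_coe]
        exact EReal.add_lt_top hv.ne (EReal.coe_ne_top α)
      | inr hvn => exact EReal.add_lt_add_right_coe hv _
    have : sclo Φ f < v + (α : EReal) := lt_of_le_of_lt (h f) h1
    exact iInf_lt_iff.1 this
end
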